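/- arXiv:2201.04234 — 3 statements merged into one kernel-verified Lean document; each statement's English description precedes it below -/
import Mathlib

section
/- In binary classification, if two target conditional label distributions p_t(y|x) and p_t'(y|x) (both consistent with the same target marginal p_t(x)) differ on a set of positive target probability, then there exists a classifier f whose target error under p_t(y|x) strictly exceeds its target error under p_t'(y|x). Hence target accuracy is not identified from p_s(x,y) and p_t(x) alone. -/
/-!
Predict label `1` exactly where `q < q'`. At each point this classifier's conditional error under
`q` exceeds the one under `q'` by `|q - q'|`, so the gap between the two target errors is
`∫ |q - q'| dμ`, which is positive because `q ≠ q'` on a set of positive measure.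
-/

open MeasureTheory

theorem ite_lt_sub_ite_lt_eq_abs_sub (a b : ℝ) :
    (if a < b then 1 - a else a) - (if a < b then 1 - b else b) = |a - b| := by
  split_ifs with hab
  · rw [abs_of_neg (sub_neg.mpr hab)]
    ring
  · rw [abs_of_nonneg (sub_nonneg.mpr (not_lt.mp hab))]

section

variable {X : Type*} [MeasurableSpace X] {μ : Measure X}

theorem integrable_ite_one_sub [IsFiniteMeasure μ] {f : X → Bool} (hf : Measurable f)
    {q : X → ℝ} (hq : Measurable q) (hq01 : ∀ x, q x ∈ Set.Icc (0 : ℝ) 1) :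
    Integrable (fun x => if f x then 1 - q x else q x) μ := by
  refine Integrable.of_mem_Icc 0 1
    ((measurable_const.sub hq).ite (hf (measurableSet_singleton true)) hq).aemeasurable
    (ae_of_all _ fun x => ?_)
  obtain ⟨h0, h1⟩ := hq01 x
  split_ifs <;> constructor <;> linarith

theorem integral_abs_sub_pos {q q' : X → ℝ} (hq : Integrable q μ) (hq' : Integrable q' μ)
    (hne : 0 < μ {x | q x ≠ q' x}) : 0 < ∫ x, |q x - q' x| ∂μ := by
  have hint : Integrable (fun x => |q x - q' x|) μ := (hq.sub hq').abs
  rw [integral_pos_iff_support_of_nonneg (fun x => abs_nonneg _) hint]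
  simpa only [Function.support, ne_eq, abs_eq_zero, sub_eq_zero] using hne

end

/-- In binary classification, if two target conditional label distributions `q` and `q'`
(probabilities of label 1 given x, both relative to the same target marginal `μ`) differ on a
set of positive `μ`-probability, then there is a classifier `f` whose target error under `q`
strictly exceeds its target error under `q'`. -/
theorem stmt_0 {X : Type*} [MeasurableSpace X] (μ : Measure X) [IsProbabilityMeasure μ]
    (q q' : X → ℝ) (hq : Measurable q) (hq' : Measurable q')
    (hq01 : ∀ x, q x ∈ Set.Icc (0:ℝ) 1) (hq'01 : ∀ x, q' x ∈ Set.Icc (0:ℝ) 1)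
    (hdiff : 0 < μ {x | q x ≠ q' x}) :
    ∃ f : X → Bool, Measurable f ∧
      ∫ x, (if f x then 1 - q' x else q' x) ∂μ < ∫ x, (if f x then 1 - q x else q x) ∂μ := by
  set f : X → Bool := fun x => decide (q x < q' x)
  have hf : Measurable f := measurable_to_bool <| by
    simpa only [f, Set.preimage, Set.mem_singleton_iff, decide_eq_true_eq]
      using measurableSet_lt hq hq'
  refine ⟨f, hf, ?_⟩
  have hgap : ∫ x, (if f x then 1 - q x else q x) ∂μ - ∫ x, (if f x then 1 - q' x else q' x) ∂μ
      = ∫ x, |q x - q' x| ∂μ := by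
    rw [← integral_sub (integrable_ite_one_sub hf hq hq01) (integrable_ite_one_sub hf hq' hq'01)]
    simp only [f, decide_eq_true_eq, ite_lt_sub_ite_lt_eq_abs_sub]
  have hpos := integral_abs_sub_pos
    (Integrable.of_mem_Icc 0 1 hq.aemeasurable (ae_of_all μ hq01))
    (Integrable.of_mem_Icc 0 1 hq'.aemeasurable (ae_of_all μ hq'01)) hdiff
  linarith
end

section
/- ATC threshold transfer in the toy model: fix a classifier with w_inv > 0, w_spr > 0, and suppose the threshold t obtained on source samples satisfies t < e^{w_inv γ + w_spr}/(1+e^{w_inv γ + w_spr}) (all consistent-set points score above t). Then for any target distribution that changes only the probability mass p'_spr of the consistent set X_C (keeping the conditional distributions of x given membership in X_M or X_C fixed), the ATC estimate P_t[s(f(x)) < t] differs from the true target error P_t[prediction ≠ y] by exactly (1 - p'_spr)·(q_thres - q_err), where q_thres = P[s(f(x)) < t | X_M] and q_err = P[error | X_M] are shift-invariant quantities; in particular if q_thres = q_err on the source within X_M, the ATC estimate equals the true target error for every such target. -/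
open MeasureTheory

/-- A point of the toy model: `(x_inv, x_spr, y)` with label `y : Bool` (`true` = label 1). -/
abbrev ToyPoint := ℝ × ℝ × Bool

/-- Logit of the linear classifier. -/
noncomputable def toyLogit (winv wspr : ℝ) (p : ToyPoint) : ℝ := winv * p.1 + wspr * p.2.1

/-- Maximum confidence score of the sigmoid linear classifier. -/
noncomputable def toyConf (winv wspr : ℝ) (p : ToyPoint) : ℝ :=
  max (Real.exp (toyLogit winv wspr p) / (1 + Real.exp (toyLogit winv wspr p)))
      (1 / (1 + Real.exp (toyLogit winv wspr p)))

/-- The classifier (predicting 1 iff `wᵀx > 0`) errs at `p`. -/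
def toyErr (winv wspr : ℝ) (p : ToyPoint) : Prop :=
  ¬ ((0 < toyLogit winv wspr p) ↔ p.2.2 = true)

/-- Membership in the consistent set `X_C` of the toy model. -/
def toyInC (γ c : ℝ) (p : ToyPoint) : Prop :=
  if p.2.2 then p.2.1 = 1 ∧ γ ≤ p.1 ∧ p.1 ≤ c
  else p.2.1 = -1 ∧ -c ≤ p.1 ∧ p.1 ≤ -γ

/-- Membership in the minority (spurious-mismatch) set `X_M` of the toy model. -/
def toyInM (γ c : ℝ) (p : ToyPoint) : Prop :=
  if p.2.2 then p.2.1 = -1 ∧ γ ≤ p.1 ∧ p.1 ≤ c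
  else p.2.1 = 1 ∧ -c ≤ p.1 ∧ p.1 ≤ -γ

/-!
Every point of the consistent set `X_C` has logit of the correct sign and of absolute value at
least `winv * γ + wspr > 0`, so it is classified correctly and its confidence
`sigmoid |logit|` is at least `sigmoid (winv * γ + wspr) > t`. Both events `{score < t}` and
`{error}` are therefore `νC`-null, and their mass under the mixture is `1 - p'` times their
`νM`-mass.
-/

open Real

theorem exp_div_one_add_exp (x : ℝ) : exp x / (1 + exp x) = sigmoid x := by
  rw [sigmoid_def, exp_neg]
  field_simp
  ring

theorem sigmoid_abs_eq_max (x : ℝ) :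
    sigmoid |x| = max (exp x / (1 + exp x)) (1 / (1 + exp x)) := by
  rw [exp_div_one_add_exp, one_div, ← neg_neg x, ← sigmoid_def, neg_neg,
    ← sigmoid_monotone.map_max, abs_eq_max_neg]

theorem toyConf_eq_sigmoid_abs (winv wspr : ℝ) (p : ToyPoint) :
    toyConf winv wspr p = sigmoid |toyLogit winv wspr p| :=
  (sigmoid_abs_eq_max _).symm

theorem le_toyLogit_of_toyInC {winv γ c : ℝ} (wspr : ℝ) {p : ToyPoint} (hwinv : 0 ≤ winv)
    (hp : toyInC γ c p) :
    winv * γ + wspr ≤ if p.2.2 then toyLogit winv wspr p else -toyLogit winv wspr p := by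
  obtain ⟨x, s, _ | _⟩ := p <;>
    simp only [toyInC, toyLogit, Bool.false_eq_true, ↓reduceIte] at hp ⊢ <;>
    obtain ⟨rfl, h₁, h₂⟩ := hp <;> nlinarith

theorem setOf_toyConf_lt_subset {winv wspr γ c t : ℝ} (hwinv : 0 ≤ winv)
    (ht : t ≤ sigmoid (winv * γ + wspr)) :
    {p | toyConf winv wspr p < t} ⊆ {p | ¬ toyInC γ c p} := by
  intro p (hlt : toyConf winv wspr p < t) hp
  have hmargin : winv * γ + wspr ≤ |toyLogit winv wspr p| := by
    refine (le_toyLogit_of_toyInC wspr hwinv hp).trans ?_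
    split_ifs
    · exact le_abs_self _
    · exact neg_le_abs _
  rw [toyConf_eq_sigmoid_abs] at hlt
  exact (ht.trans (sigmoid_le hmargin)).not_gt hlt

theorem setOf_toyErr_subset {winv wspr γ c : ℝ} (hwinv : 0 ≤ winv)
    (hmargin : 0 < winv * γ + wspr) : {p | toyErr winv wspr p} ⊆ {p | ¬ toyInC γ c p} := by
  intro p herr hp
  have h := le_toyLogit_of_toyInC wspr hwinv hp
  apply herr
  cases hy : p.2.2 <;> simp only [hy, Bool.false_eq_true, ↓reduceIte] at h ⊢ <;> simp <;>
    linarith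

theorem toReal_mixture_apply_of_null {α : Type*} [MeasurableSpace α] {μ ν : Measure α}
    [IsFiniteMeasure ν] {s : Set α} (hs : μ s = 0) (a : ℝ) {b : ℝ} (hb : 0 ≤ b) :
    ((ENNReal.ofReal a • μ + ENNReal.ofReal b • ν) s).toReal = b * (ν s).toReal := by
  simp [hs, ENNReal.toReal_mul, hb]

theorem stmt_11_general (winv wspr γ c t : ℝ)
    (hwinv : 0 < winv) (hwspr : 0 < wspr) (hγ : 0 < γ)
    (ht : t < Real.exp (winv * γ + wspr) / (1 + Real.exp (winv * γ + wspr)))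
    (νM νC : Measure ToyPoint) [IsProbabilityMeasure νM]
    (hC : νC {p | ¬ toyInC γ c p} = 0)
    (p' : ℝ) (hp'1 : p' ≤ 1) :
    ((ENNReal.ofReal p' • νC + ENNReal.ofReal (1 - p') • νM)
        {p | toyConf winv wspr p < t}).toReal
      - ((ENNReal.ofReal p' • νC + ENNReal.ofReal (1 - p') • νM)
        {p | toyErr winv wspr p}).toReal
      = (1 - p') * ((νM {p | toyConf winv wspr p < t}).toReal
          - (νM {p | toyErr winv wspr p}).toReal)
    ∧ ((νM {p | toyConf winv wspr p < t}).toReal = (νM {p | toyErr winv wspr p}).toReal →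
        ((ENNReal.ofReal p' • νC + ENNReal.ofReal (1 - p') • νM)
            {p | toyConf winv wspr p < t}).toReal
          = ((ENNReal.ofReal p' • νC + ENNReal.ofReal (1 - p') • νM)
            {p | toyErr winv wspr p}).toReal) := by
  rw [exp_div_one_add_exp] at ht
  have hconf : νC {p | toyConf winv wspr p < t} = 0 :=
    measure_mono_null (setOf_toyConf_lt_subset hwinv.le ht.le) hC
  have herr : νC {p | toyErr winv wspr p} = 0 :=
    measure_mono_null (setOf_toyErr_subset hwinv.le (by positivity)) hC
  have hp' : 0 ≤ 1 - p' := by linarith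
  rw [toReal_mixture_apply_of_null hconf p' hp', toReal_mixture_apply_of_null herr p' hp']
  exact ⟨by ring, fun h => by rw [h]⟩

/-- ATC threshold transfer in the toy model: fix a classifier with `w_inv, w_spr > 0` and a
threshold `t` below the consistent-set boundary confidence.  For any target distribution
`μ = p'·ν_C + (1-p')·ν_M` that changes only the mass `p'` of the consistent set (keeping the
conditionals `ν_M`, `ν_C`, supported on `X_M` resp. `X_C`, fixed), the ATC estimate
`P_t[s(f(x)) < t]` differs from the true target error by exactly
`(1 - p')·(q_thres - q_err)` where `q_thres = ν_M{score < t}` and `q_err = ν_M{error}` are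
shift-invariant; in particular if they agree, the ATC estimate equals the true target error for
every such target. -/
theorem stmt_11 (winv wspr γ c t : ℝ)
    (hwinv : 0 < winv) (hwspr : 0 < wspr) (hγ : 0 < γ) (hγc : γ < c)
    (ht : t < Real.exp (winv * γ + wspr) / (1 + Real.exp (winv * γ + wspr)))
    (νM νC : Measure ToyPoint) [IsProbabilityMeasure νM] [IsProbabilityMeasure νC]
    (hM : νM {p | ¬ toyInM γ c p} = 0) (hC : νC {p | ¬ toyInC γ c p} = 0)
    (p' : ℝ) (hp'0 : 0 ≤ p') (hp'1 : p' ≤ 1) :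
    ((ENNReal.ofReal p' • νC + ENNReal.ofReal (1 - p') • νM)
        {p | toyConf winv wspr p < t}).toReal
      - ((ENNReal.ofReal p' • νC + ENNReal.ofReal (1 - p') • νM)
        {p | toyErr winv wspr p}).toReal
      = (1 - p') * ((νM {p | toyConf winv wspr p < t}).toReal
          - (νM {p | toyErr winv wspr p}).toReal)
    ∧ ((νM {p | toyConf winv wspr p < t}).toReal = (νM {p | toyErr winv wspr p}).toReal →
        ((ENNReal.ofReal p' • νC + ENNReal.ofReal (1 - p') • νM)
            {p | toyConf winv wspr p < t}).toReal
          = ((ENNReal.ofReal p' • νC + ENNReal.ofReal (1 - p') • νM)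
            {p | toyErr winv wspr p}).toReal) :=
  stmt_11_general winv wspr γ c t hwinv hwspr hγ ht νM νC hC p' hp'1
end

section
/- Generalized label shift error identity: suppose h: X -> Z is a representation such that p_s(h(x)|y) = p_t(h(x)|y) and p_s(y) > 0 for all y in the target label support, and suppose the classifier f factors through h (f(x) depends on x only via h(x)). Then the target error of f equals E_{(x,y)~p_s}[ (p_t(y)/p_s(y)) · 1{f(x) ≠ y} ]. -/
open MeasureTheory

/-! Since `f = g ∘ h`, the event `f x ≠ y` is the `h`-preimage of the measurable set
`{z | g z ≠ y}`, so its probability under each class-conditional law depends only on the law of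
`h(x)` given `y`, which is the same for source and target. The weight `p_t(y)/p_s(y)` then cancels
against `p_s(y)`, the support condition ruling out `p_s(y) = 0 < p_t(y)`. -/

theorem MeasureTheory.Measure.measure_preimage_eq_of_map_eq {X Z : Type*} [MeasurableSpace X]
    [MeasurableSpace Z] {h : X → Z} (hh : Measurable h) {μ ν : Measure X}
    (hμν : μ.map h = ν.map h) {s : Set Z} (hs : MeasurableSet s) :
    μ (h ⁻¹' s) = ν (h ⁻¹' s) := by
  rw [← Measure.map_apply hh hs, ← Measure.map_apply hh hs, hμν]

theorem MeasureTheory.Measure.measure_comp_ne_eq_of_map_eq {X Z Y : Type*} [MeasurableSpace X]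
    [MeasurableSpace Z] [MeasurableSpace Y] [MeasurableSingletonClass Y] {h : X → Z}
    (hh : Measurable h) {g : Z → Y} (hg : Measurable g) {μ ν : Measure X}
    (hμν : μ.map h = ν.map h) (y : Y) :
    μ {x | g (h x) ≠ y} = ν {x | g (h x) ≠ y} :=
  measure_preimage_eq_of_map_eq hh hμν (hg (measurableSet_singleton y)).compl

theorem stmt_15_general {X Z Y : Type*} [MeasurableSpace X] [MeasurableSpace Z] [MeasurableSpace Y]
    [Fintype Y] [MeasurableSingletonClass Y]
    (h : X → Z) (hh : Measurable h) (g : Z → Y) (hg : Measurable g)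
    (κs κt : Y → Measure X)
    (psY ptY : Y → ℝ) (hptY : ∀ y, 0 ≤ ptY y)
    (hsupp : ∀ y, 0 < ptY y → 0 < psY y)
    (hGLS : ∀ y, Measure.map h (κs y) = Measure.map h (κt y))
    (f : X → Y) (hf : ∀ x, f x = g (h x)) :
    ∑ y, ptY y * ((κt y) {x | f x ≠ y}).toReal
      = ∑ y, psY y * ((ptY y / psY y) * ((κs y) {x | f x ≠ y}).toReal) := by
  simp only [hf]
  refine Finset.sum_congr rfl fun y _ => ?_
  have hweight : psY y = 0 → ptY y = 0 := fun hps =>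
    ((hptY y).eq_of_not_lt fun hpt => (hsupp y hpt).ne' hps).symm
  rw [Measure.measure_comp_ne_eq_of_map_eq hh hg (hGLS y).symm, ← mul_assoc,
    mul_div_cancel_of_imp' hweight]

/-- Generalized label shift error identity: if `h : X → Z` is a representation whose conditional
law given each label `y` is the same under source and target (`map h (κs y) = map h (κt y)`),
`p_s(y) > 0` on the target label support, and the classifier factors through `h` as `g ∘ h`,
then the target error equals the importance-weighted source error with weights
`p_t(y)/p_s(y)`. -/
theorem stmt_15 {X Z Y : Type*} [MeasurableSpace X] [MeasurableSpace Z] [MeasurableSpace Y]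
    [Fintype Y] [DecidableEq Y] [MeasurableSingletonClass Y]
    (h : X → Z) (hh : Measurable h) (g : Z → Y) (hg : Measurable g)
    (κs κt : Y → Measure X)
    [∀ y, IsProbabilityMeasure (κs y)] [∀ y, IsProbabilityMeasure (κt y)]
    (psY ptY : Y → ℝ) (hpsY : ∀ y, 0 ≤ psY y) (hptY : ∀ y, 0 ≤ ptY y)
    (hsupp : ∀ y, 0 < ptY y → 0 < psY y)
    (hGLS : ∀ y, Measure.map h (κs y) = Measure.map h (κt y))
    (f : X → Y) (hf : ∀ x, f x = g (h x)) :
    ∑ y, ptY y * ((κt y) {x | f x ≠ y}).toReal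
      = ∑ y, psY y * ((ptY y / psY y) * ((κs y) {x | f x ≠ y}).toReal) :=
  stmt_15_general h hh g hg κs κt psY ptY hptY hsupp hGLS f hf
end
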